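/- arXiv:1809.08696 — 5 statements merged into one kernel-verified Lean document; each statement's English description precedes it below -/
import Mathlib

section
/- Let A be a real m×d matrix, y ∈ ℝ^m, α > 0, and let z : (0,∞) → ℝ^d be the map assigning to each λ > 0 the unique minimizer z(λ) of the elastic net functional F_λ(z) = ‖A z − y‖₂² + λ(‖z‖₁ + α‖z‖₂²). Then z is continuous on (0,∞): whenever λₙ → λ₀ with λₙ, λ₀ > 0, one has z(λₙ) → z(λ₀) in ℝ^d. -/
set_option maxHeartbeats 1000000


open Matrix

/-- Lemma 2.5 (continuity of the solution map): the map `λ ↦ z(λ)` assigning to each `λ > 0`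
the (unique) minimizer of the elastic net functional
`F_λ z = ‖Az - y‖₂² + λ(‖z‖₁ + α‖z‖₂²)` is continuous on `(0, ∞)`. -/
theorem elasticNet_solution_map_continuous {m d : ℕ}
    (A : Matrix (Fin m) (Fin d) ℝ) (y : EuclideanSpace ℝ (Fin m))
    (α : ℝ) (hα : 0 < α)
    (F : ℝ → EuclideanSpace ℝ (Fin d) → ℝ)
    (hF : ∀ lam z, F lam z = ‖Matrix.toEuclideanLin A z - y‖ ^ 2 +
      lam * ((∑ i, |z i|) + α * ‖z‖ ^ 2))
    (z : ℝ → EuclideanSpace ℝ (Fin d))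
    (hmin : ∀ lam, 0 < lam → ∀ u, F lam (z lam) ≤ F lam u)
    (huniq : ∀ lam, 0 < lam → ∀ u, (∀ v, F lam u ≤ F lam v) → u = z lam) :
    ContinuousOn z (Set.Ioi 0) := by
  classical
  set Q : EuclideanSpace ℝ (Fin d) → ℝ :=
    fun u => ‖Matrix.toEuclideanLin A u - y‖ ^ 2 with hQdef
  set G : EuclideanSpace ℝ (Fin d) → ℝ :=
    fun u => (∑ i, |u i|) + α * ‖u‖ ^ 2 with hGdef
  clear_value Q G
  have hFQ : ∀ lam u, F lam u = Q u + lam * G u := by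
    intro lam u
    simp only [hQdef, hGdef]
    exact hF lam u
  -- nonnegativity of G
  have hG0 : ∀ u, 0 ≤ G u := by
    intro u
    have h1 : 0 ≤ ∑ i, |u i| := Finset.sum_nonneg fun i _ => abs_nonneg _
    have h2 : 0 ≤ α * ‖u‖ ^ 2 := by positivity
    simp only [hGdef]; linarith
  -- bound on G (z lam)
  have hGz : ∀ lam, 0 < lam → lam * G (z lam) ≤ ‖y‖ ^ 2 := by
    intro lam hlam
    have h := hmin lam hlam 0
    rw [hFQ, hFQ] at h
    have hQ0 : Q (0 : EuclideanSpace ℝ (Fin d)) = ‖y‖ ^ 2 := by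
      simp [hQdef]
    have hG00 : G (0 : EuclideanSpace ℝ (Fin d)) = 0 := by
      simp [hGdef]
    have hQnn : 0 ≤ Q (z lam) := by rw [hQdef]; positivity
    rw [hQ0, hG00] at h
    linarith
  -- strong convexity: quantitative minimality
  have key : ∀ lam, 0 < lam → ∀ u,
      F lam (z lam) + (lam * α / 2) * ‖u - z lam‖ ^ 2 ≤ F lam u := by
    intro lam hlam u
    set x := z lam with hx
    clear_value x
    obtain ⟨w, hw⟩ : ∃ w : EuclideanSpace ℝ (Fin d), w = (2:ℝ)⁻¹ • (u + x) :=
      ⟨_, rfl⟩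
    have hQw : Q w ≤ (Q u + Q x) / 2 := by
      have h1 : Matrix.toEuclideanLin A w - y =
          (2:ℝ)⁻¹ • ((Matrix.toEuclideanLin A u - y) +
            (Matrix.toEuclideanLin A x - y)) := by
        rw [hw, _root_.map_smul, map_add]
        module
      have h2 : ‖Matrix.toEuclideanLin A w - y‖ =
          (2:ℝ)⁻¹ * ‖(Matrix.toEuclideanLin A u - y) +
            (Matrix.toEuclideanLin A x - y)‖ := by
        rw [h1, norm_smul]; norm_num
      have h3 := norm_add_le (Matrix.toEuclideanLin A u - y)
        (Matrix.toEuclideanLin A x - y)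
      have h4 : (0:ℝ) ≤ ‖Matrix.toEuclideanLin A u - y‖ := norm_nonneg _
      have h5 : (0:ℝ) ≤ ‖Matrix.toEuclideanLin A x - y‖ := norm_nonneg _
      have h6 : (0:ℝ) ≤ ‖(Matrix.toEuclideanLin A u - y) +
          (Matrix.toEuclideanLin A x - y)‖ := norm_nonneg _
      have h7 := pow_le_pow_left₀ h6 h3 2
      simp only [hQdef]
      rw [h2]
      nlinarith [h7, sq_nonneg (‖Matrix.toEuclideanLin A u - y‖ -
        ‖Matrix.toEuclideanLin A x - y‖)]
    have hL1 : (∑ i, |w i|) ≤ ((∑ i, |u i|) + ∑ i, |x i|) / 2 := by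
      have happ : ∀ i, w i = (2:ℝ)⁻¹ * (u i + x i) := fun i => by rw [hw]; rfl
      calc (∑ i, |w i|) ≤ ∑ i, ((|u i| + |x i|) / 2) := by
            refine Finset.sum_le_sum fun i _ => ?_
            rw [happ i, abs_mul]
            have := abs_add_le (u i) (x i)
            have h2 : |(2:ℝ)⁻¹| = 2⁻¹ := by norm_num
            rw [h2]
            linarith
        _ = ((∑ i, |u i|) + ∑ i, |x i|) / 2 := by
            rw [← Finset.sum_div, Finset.sum_add_distrib]
    have hNw : ‖w‖ ^ 2 = (‖u‖ ^ 2 + ‖x‖ ^ 2) / 2 - ‖u - x‖ ^ 2 / 4 := by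
      have hp := parallelogram_law_with_norm ℝ u x
      have h2 : ‖w‖ = (2:ℝ)⁻¹ * ‖u + x‖ := by
        rw [hw, norm_smul]; norm_num
      have h3 : ‖w‖ ^ 2 = ((2:ℝ)⁻¹ * ‖u + x‖) ^ 2 := by rw [h2]
      nlinarith [hp, h3]
    have hGw : G w ≤ (G u + G x) / 2 - α * ‖u - x‖ ^ 2 / 4 := by
      have hαw : α * ‖w‖ ^ 2 = α * ((‖u‖ ^ 2 + ‖x‖ ^ 2) / 2 - ‖u - x‖ ^ 2 / 4) := by
        rw [hNw]
      simp only [hGdef]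
      linarith [hL1, hαw]
    have hmw := hmin lam hlam w
    rw [hFQ, hFQ, ← hx] at hmw
    rw [hFQ, hFQ]
    have hGw' : lam * G w ≤ lam * ((G u + G x) / 2 - α * ‖u - x‖ ^ 2 / 4) :=
      mul_le_mul_of_nonneg_left hGw hlam.le
    linarith [hmw, hQw, hGw']
  -- comparison of two minimizers
  have key2 : ∀ lam mu, 0 < lam → 0 < mu →
      (lam * α / 2) * ‖z mu - z lam‖ ^ 2 ≤
        (lam - mu) * (G (z mu) - G (z lam)) := by
    intro lam mu hlam hmu
    have h1 := key lam hlam (z mu)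
    have h2 := hmin mu hmu (z lam)
    rw [hFQ, hFQ] at h1
    rw [hFQ, hFQ] at h2
    linarith [h1, h2]
  -- continuity
  intro l0 hl0
  simp only [Set.mem_Ioi] at hl0
  rw [Metric.continuousWithinAt_iff]
  intro ε hε
  set N := ‖y‖ ^ 2 with hN
  have hN0 : 0 ≤ N := by rw [hN]; positivity
  clear_value N
  have hden : (0:ℝ) < 6 * N + 1 := by linarith
  refine ⟨min (l0 / 2) (ε ^ 2 * l0 ^ 2 * α / (6 * N + 1)),
    lt_min (by linarith) (div_pos (by positivity) hden), ?_⟩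
  intro mu hmu hdist
  have hmu0 : 0 < mu := hmu
  set δ := min (l0 / 2) (ε ^ 2 * l0 ^ 2 * α / (6 * N + 1)) with hδ
  have hδ1 : δ ≤ l0 / 2 := min_le_left _ _
  have hδ2 : δ ≤ ε ^ 2 * l0 ^ 2 * α / (6 * N + 1) := min_le_right _ _
  have hδ0 : 0 ≤ δ :=
    le_min (by linarith) (div_pos (by positivity) hden).le
  clear_value δ
  rw [Real.dist_eq] at hdist
  have habs := abs_lt.1 hdist
  -- lower bound on mu
  have hmul : l0 / 2 ≤ mu := by
    have : l0 - mu < δ := by linarith [habs.2]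
    linarith
  set D := dist (z mu) (z l0) with hD
  have hDnorm : D = ‖z mu - z l0‖ := dist_eq_norm _ _
  have hD0 : 0 ≤ D := dist_nonneg
  clear_value D
  have h1 := key2 l0 mu hl0 hmu0
  rw [← hDnorm] at h1
  have hGmu0 : 0 ≤ G (z mu) := hG0 _
  have hGl0 : 0 ≤ G (z l0) := hG0 _
  have hGmuB := hGz mu hmu0
  have hGlB := hGz l0 hl0
  -- λ₀ * G(z mu) ≤ 2 N
  have hGmu2 : l0 * G (z mu) ≤ 2 * N := by
    nlinarith [mul_nonneg (by linarith : (0:ℝ) ≤ 2 * mu - l0) hGmu0]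
  -- step2: (l0 - mu)(Gμ - Gλ) ≤ δ (Gμ + Gλ)
  have step2 : (l0 - mu) * (G (z mu) - G (z l0)) ≤ δ * (G (z mu) + G (z l0)) := by
    have ha : (0:ℝ) ≤ δ - (l0 - mu) := by linarith [habs.1]
    have hb : (0:ℝ) ≤ δ + (l0 - mu) := by linarith [habs.2]
    nlinarith [mul_nonneg ha hGmu0, mul_nonneg hb hGl0]
  -- combine: l0^2 * α * D^2 ≤ 6 N δ
  have s1 : l0 * ((l0 * α / 2) * D ^ 2) ≤
      l0 * ((l0 - mu) * (G (z mu) - G (z l0))) :=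
    mul_le_mul_of_nonneg_left h1 hl0.le
  have s2 : l0 * ((l0 - mu) * (G (z mu) - G (z l0))) ≤
      l0 * (δ * (G (z mu) + G (z l0))) :=
    mul_le_mul_of_nonneg_left step2 hl0.le
  have s3 : δ * (l0 * G (z mu)) ≤ δ * (2 * N) :=
    mul_le_mul_of_nonneg_left hGmu2 hδ0
  have s4 : δ * (l0 * G (z l0)) ≤ δ * N :=
    mul_le_mul_of_nonneg_left hGlB hδ0
  have hD2 : l0 ^ 2 * α * D ^ 2 ≤ 6 * N * δ := by nlinarith [s1, s2, s3, s4]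
  have hδ2' : δ * (6 * N + 1) ≤ ε ^ 2 * l0 ^ 2 * α := by
    rw [le_div_iff₀ (by positivity : (0:ℝ) < 6 * N + 1)] at hδ2
    linarith [hδ2]
  have hsq : D ^ 2 < ε ^ 2 := by
    by_contra hcon
    push_neg at hcon
    have h6 : (0:ℝ) < l0 ^ 2 * α := by positivity
    have e1 : (6 * N + 1) * (l0 ^ 2 * α * D ^ 2) ≤ (6 * N + 1) * (6 * N * δ) :=
      mul_le_mul_of_nonneg_left hD2 (by linarith)
    have e2 : (6 * N) * (δ * (6 * N + 1)) ≤ (6 * N) * (ε ^ 2 * l0 ^ 2 * α) :=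
      mul_le_mul_of_nonneg_left hδ2' (by linarith)
    have e3 : (6 * N + 1) * (l0 ^ 2 * α * ε ^ 2) ≤
        (6 * N + 1) * (l0 ^ 2 * α * D ^ 2) :=
      mul_le_mul_of_nonneg_left (mul_le_mul_of_nonneg_left hcon h6.le)
        (by linarith)
    have e4 : (0:ℝ) < l0 ^ 2 * α * ε ^ 2 := by positivity
    linarith [e1, e2, e3, e4]
  nlinarith [hsq, hD0, hε]
end

section
/- Let A be a real m×d matrix, y ∈ ℝ^m, α > 0 and t ∈ (0,1). Let σ_m, σ_M ≥ 0 satisfy σ_m‖z‖₂ ≤ ‖A z‖₂ ≤ σ_M‖z‖₂ for all z ∈ ℝ^d (the smallest and largest singular values of A), and set θ = (σ_m² + σ_M²)/2. Then the map T_t : ℝ^d → ℝ^d defined by T_t(z) = (θ t + (1−t)α)⁻¹ · S_{1−t}( t(θ I − AᵀA) z + t Aᵀ y ) is Lipschitz with constant L = t(σ_M² − σ_m²) / ( t(σ_M² + σ_m²) + 2α(1−t) ), and L < 1, i.e., T_t is a contraction. -/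
open Matrix

open scoped RealInnerProductSpace

/-!
Soft thresholding is `u ↦ u - clamp u`, hence 1-Lipschitz in each coordinate, so `T_t` is
Lipschitz with constant `t / (θ t + (1 - t) α)` times the operator norm of `θ I - AᵀA`. That
operator is symmetric with Rayleigh quotients in `[θ - σ_M², θ - σ_m²] = [-(σ_M² - σ_m²)/2,
(σ_M² - σ_m²)/2]`, and the norm of a symmetric operator is its largest Rayleigh quotient in
absolute value; the resulting constant simplifies to `L`.
-/

noncomputable def softThreshold (τ u : ℝ) : ℝ := Real.sign u * max (|u| - τ / 2) 0

lemma softThreshold_eq_sub_clamp (τ u : ℝ) (hτ : 0 ≤ τ) :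
    softThreshold τ u = u - max (-(τ / 2)) (min u (τ / 2)) := by
  rw [softThreshold]
  rcases lt_trichotomy u 0 with h | rfl | h
  · rw [Real.sign_of_neg h, abs_of_neg h]; grind
  · rw [Real.sign_zero, abs_zero]; grind
  · rw [Real.sign_of_pos h, abs_of_pos h]; grind

theorem abs_softThreshold_sub_softThreshold_le {τ : ℝ} (hτ : 0 ≤ τ) (a b : ℝ) :
    |softThreshold τ a - softThreshold τ b| ≤ |a - b| := by
  rw [softThreshold_eq_sub_clamp τ a hτ, softThreshold_eq_sub_clamp τ b hτ, abs_le]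
  constructor <;> grind

theorem EuclideanSpace.norm_le_norm_of_forall_abs_le {ι : Type*} [Fintype ι]
    {x y : EuclideanSpace ℝ ι} (h : ∀ i, |x i| ≤ |y i|) : ‖x‖ ≤ ‖y‖ := by
  simp only [EuclideanSpace.norm_eq, Real.norm_eq_abs]
  exact Real.sqrt_le_sqrt <| Finset.sum_le_sum fun i _ => pow_le_pow_left₀ (abs_nonneg _) (h i) 2

noncomputable def softThresholdVec {ι : Type*} (τ : ℝ) (u : EuclideanSpace ℝ ι) :
    EuclideanSpace ℝ ι :=
  WithLp.toLp 2 fun i => softThreshold τ (u i)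

theorem norm_softThresholdVec_sub_le {ι : Type*} [Fintype ι] {τ : ℝ} (hτ : 0 ≤ τ)
    (u v : EuclideanSpace ℝ ι) : ‖softThresholdVec τ u - softThresholdVec τ v‖ ≤ ‖u - v‖ :=
  EuclideanSpace.norm_le_norm_of_forall_abs_le fun i =>
    abs_softThreshold_sub_softThreshold_le hτ (u i) (v i)

theorem LinearMap.IsSymmetric.norm_apply_le_of_abs_inner_self_le {E : Type*} [NormedAddCommGroup E]
    [InnerProductSpace ℝ E] {T : E →L[ℝ] E} (hT : (T : E →ₗ[ℝ] E).IsSymmetric) {c : ℝ}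
    (h : ∀ x, |⟪T x, x⟫| ≤ c * ‖x‖ ^ 2) (x : E) : ‖T x‖ ≤ c * ‖x‖ := by
  rcases eq_or_ne x 0 with rfl | hx
  · simp
  have hx2 : 0 < ‖x‖ ^ 2 := by positivity
  have hc : 0 ≤ c := nonneg_of_mul_nonneg_left ((abs_nonneg _).trans (h x)) hx2
  refine T.le_of_opNorm_le ?_ x
  rw [T.norm_eq_iSup_rayleighQuotient hT]
  refine ciSup_le fun y => ?_
  rcases eq_or_ne y 0 with rfl | hy
  · simpa using hc
  rw [ContinuousLinearMap.rayleighQuotient, ContinuousLinearMap.reApplyInnerSelf_apply, abs_div,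
    abs_of_pos (by positivity : 0 < ‖y‖ ^ 2)]
  exact div_le_of_le_mul₀ (by positivity) hc (h y)

theorem LinearMap.IsSymmetric.norm_midpoint_smul_sub_apply_le {E : Type*} [NormedAddCommGroup E]
    [InnerProductSpace ℝ E] {S : E →L[ℝ] E} (hS : (S : E →ₗ[ℝ] E).IsSymmetric) {lo hi : ℝ}
    (hlo : ∀ x, lo * ‖x‖ ^ 2 ≤ ⟪S x, x⟫) (hhi : ∀ x, ⟪S x, x⟫ ≤ hi * ‖x‖ ^ 2) (x : E) :
    ‖((lo + hi) / 2) • x - S x‖ ≤ (hi - lo) / 2 * ‖x‖ := by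
  set T : E →L[ℝ] E := ((lo + hi) / 2) • ContinuousLinearMap.id ℝ E - S
  have hT : (T : E →ₗ[ℝ] E).IsSymmetric := (LinearMap.IsSymmetric.id.smul rfl).sub hS
  refine hT.norm_apply_le_of_abs_inner_self_le (fun y => ?_) x
  have hTy : ⟪T y, y⟫ = (lo + hi) / 2 * ‖y‖ ^ 2 - ⟪S y, y⟫ := by
    simp [T, inner_sub_left, real_inner_smul_left]
  rw [hTy, abs_le]
  constructor <;> linarith [hlo y, hhi y]

namespace Matrix

variable {m n : Type*} [Fintype m] [Fintype n] [DecidableEq m] [DecidableEq n]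

theorem inner_toEuclideanCLM_transpose_mul_self_apply (A : Matrix m n ℝ)
    (x : EuclideanSpace ℝ n) :
    ⟪toEuclideanCLM (𝕜 := ℝ) (Aᵀ * A) x, x⟫ = ‖toEuclideanLin A x‖ ^ 2 := by
  have : toEuclideanCLM (𝕜 := ℝ) (Aᴴ * A) x = toEuclideanLin Aᴴ (toEuclideanLin A x) := by
    ext i; simp [toLpLin_apply, mulVec_mulVec]
  rw [← conjTranspose_eq_transpose_of_trivial, this, toEuclideanLin_conjTranspose_eq_adjoint,
    LinearMap.adjoint_inner_left, real_inner_self_eq_norm_sq]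

theorem norm_midpoint_smul_sub_toEuclideanCLM_transpose_mul_self_apply_le (A : Matrix m n ℝ)
    {σm σM : ℝ} (hσm : 0 ≤ σm) (hlow : ∀ z, σm * ‖z‖ ≤ ‖toEuclideanLin A z‖)
    (hhigh : ∀ z, ‖toEuclideanLin A z‖ ≤ σM * ‖z‖) (x : EuclideanSpace ℝ n) :
    ‖((σm ^ 2 + σM ^ 2) / 2) • x - toEuclideanCLM (𝕜 := ℝ) (Aᵀ * A) x‖ ≤
      (σM ^ 2 - σm ^ 2) / 2 * ‖x‖ := by
  have hsa : IsSelfAdjoint (Aᵀ * A) := by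
    rw [← conjTranspose_eq_transpose_of_trivial]
    exact isHermitian_conjTranspose_mul_self A
  refine (hsa.map toEuclideanCLM).isSymmetric.norm_midpoint_smul_sub_apply_le (fun z => ?_)
    (fun z => ?_) x
  · rw [inner_toEuclideanCLM_transpose_mul_self_apply, ← mul_pow]
    exact pow_le_pow_left₀ (by positivity) (hlow z) 2
  · rw [inner_toEuclideanCLM_transpose_mul_self_apply, ← mul_pow]
    exact pow_le_pow_left₀ (norm_nonneg _) (hhigh z) 2

end Matrix

theorem elasticNet_thresholding_map_contraction_general {m d : ℕ}
    (A : Matrix (Fin m) (Fin d) ℝ) (y : EuclideanSpace ℝ (Fin m))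
    (α t σm σM : ℝ) (hα : 0 < α) (ht0 : 0 < t) (ht1 : t < 1)
    (hσm : 0 ≤ σm)
    (hlow : ∀ z : EuclideanSpace ℝ (Fin d), σm * ‖z‖ ≤ ‖Matrix.toEuclideanLin A z‖)
    (hhigh : ∀ z : EuclideanSpace ℝ (Fin d), ‖Matrix.toEuclideanLin A z‖ ≤ σM * ‖z‖)
    (θ : ℝ) (hθ : θ = (σm ^ 2 + σM ^ 2) / 2)
    (T : EuclideanSpace ℝ (Fin d) → EuclideanSpace ℝ (Fin d))
    (hT : ∀ z i, T z i = (θ * t + (1 - t) * α)⁻¹ *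
      (Real.sign (t * (θ * z i - (Aᵀ * A).mulVec (fun k => z k) i) + t * Aᵀ.mulVec (fun k => y k) i) *
        max (|t * (θ * z i - (Aᵀ * A).mulVec (fun k => z k) i) + t * Aᵀ.mulVec (fun k => y k) i| - (1 - t) / 2) 0))
    (L : ℝ) (hL : L = t * (σM ^ 2 - σm ^ 2) / (t * (σM ^ 2 + σm ^ 2) + 2 * α * (1 - t))) :
    (∀ z w : EuclideanSpace ℝ (Fin d), ‖T z - T w‖ ≤ L * ‖z - w‖) ∧ L < 1 := by
  have hden : 0 < t * (σM ^ 2 + σm ^ 2) + 2 * α * (1 - t) := by nlinarith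
  refine ⟨fun z w => ?_, by rw [hL, div_lt_one hden]; nlinarith⟩
  set G := toEuclideanCLM (𝕜 := ℝ) (Aᵀ * A)
  set c := θ * t + (1 - t) * α with hc_def
  have hc : 0 < c := by nlinarith
  set b : EuclideanSpace ℝ (Fin d) := WithLp.toLp 2 (Aᵀ *ᵥ y.ofLp)
  have hT_eq : ∀ z, T z = c⁻¹ • softThresholdVec (1 - t) (t • (θ • z - G z) + t • b) := by
    intro z; ext i; simp [hT, softThresholdVec, softThreshold, G, b]
  calc ‖T z - T w‖ ≤ c⁻¹ * ‖t • (θ • z - G z) + t • b - (t • (θ • w - G w) + t • b)‖ := by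
        rw [hT_eq, hT_eq, ← smul_sub, norm_smul, Real.norm_of_nonneg (by positivity)]
        gcongr
        exact norm_softThresholdVec_sub_le (by linarith) _ _
    _ = c⁻¹ * t * ‖θ • (z - w) - G (z - w)‖ := by
        rw [add_sub_add_right_eq_sub, ← smul_sub, norm_smul, Real.norm_of_nonneg ht0.le, map_sub,
          smul_sub, sub_sub_sub_comm, mul_assoc]
    _ ≤ c⁻¹ * t * ((σM ^ 2 - σm ^ 2) / 2 * ‖z - w‖) := by
        gcongr
        rw [hθ]
        exact norm_midpoint_smul_sub_toEuclideanCLM_transpose_mul_self_apply_le A hσm hlow hhigh _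
    _ = L * ‖z - w‖ := by
        have hcL : c⁻¹ * t * ((σM ^ 2 - σm ^ 2) / 2) = L := by
          rw [hL, hc_def, hθ]
          field_simp
          ring
        rw [← hcL]
        ring

/-- Lemma 2.6 (contraction): the soft-thresholding fixed-point map
`T_t(z) = (θt + (1-t)α)⁻¹ S_{1-t}(t(θI - AᵀA)z + tAᵀy)` is Lipschitz with constant
`L = t(σ_M² - σ_m²)/(t(σ_M² + σ_m²) + 2α(1-t)) < 1`. -/
theorem elasticNet_thresholding_map_contraction {m d : ℕ}
    (A : Matrix (Fin m) (Fin d) ℝ) (y : EuclideanSpace ℝ (Fin m))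
    (α t σm σM : ℝ) (hα : 0 < α) (ht0 : 0 < t) (ht1 : t < 1)
    (hσm : 0 ≤ σm) (hσM : 0 ≤ σM)
    (hlow : ∀ z : EuclideanSpace ℝ (Fin d), σm * ‖z‖ ≤ ‖Matrix.toEuclideanLin A z‖)
    (hhigh : ∀ z : EuclideanSpace ℝ (Fin d), ‖Matrix.toEuclideanLin A z‖ ≤ σM * ‖z‖)
    (θ : ℝ) (hθ : θ = (σm ^ 2 + σM ^ 2) / 2)
    (T : EuclideanSpace ℝ (Fin d) → EuclideanSpace ℝ (Fin d))
    (hT : ∀ z i, T z i = (θ * t + (1 - t) * α)⁻¹ *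
      (Real.sign (t * (θ * z i - (Aᵀ * A).mulVec (fun k => z k) i) + t * Aᵀ.mulVec (fun k => y k) i) *
        max (|t * (θ * z i - (Aᵀ * A).mulVec (fun k => z k) i) + t * Aᵀ.mulVec (fun k => y k) i| - (1 - t) / 2) 0))
    (L : ℝ) (hL : L = t * (σM ^ 2 - σm ^ 2) / (t * (σM ^ 2 + σm ^ 2) + 2 * α * (1 - t))) :
    (∀ z w : EuclideanSpace ℝ (Fin d), ‖T z - T w‖ ≤ L * ‖z - w‖) ∧ L < 1 :=
  elasticNet_thresholding_map_contraction_general A y α t σm σM hα ht0 ht1 hσm hlow hhigh θ hθ T hT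
    L hL
end

section
/- In the Bernoulli-noise denoising setting, assume additionally that |y₁| ≥ |y₂| ≥ … ≥ |y_m|. Then t* := t*(x) = ( Σᵢ bᵢ + 2 Σᵢ sgn(yᵢ) bᵢ xᵢ ) / Σᵢ bᵢ² satisfies t* ≥ 1/(1 + 2σ), and the point t_opt := min{t*, 1} minimizes the loss R over [0,1], i.e., R(min{t*,1}) ≤ R(t) for all t ∈ [0,1]. -/
open Finset

set_option maxHeartbeats 1600000 in
/-- Lemma 3.2 (Bernoulli-noise denoising, `A = Id`, `α = 1`): with `bᵢ = 1 + 2|yᵢ|` and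
`t* = (Σᵢ bᵢ + 2 Σᵢ sgn(yᵢ) bᵢ xᵢ) / Σᵢ bᵢ²`, one has `t* ≥ 1/(1+2σ)` and
`min(t*, 1)` minimizes the loss `R` over `[0,1]`. -/
theorem bernoulliNoise_loss_minimizer (m h : ℕ) (hh : 1 ≤ h) (hhm : h < m)
    (σ : ℝ) (hσ : 0 < σ) (x w y b : ℕ → ℝ)
    (hw : ∀ i, 1 ≤ i → i ≤ m → w i = 1 ∨ w i = -1)
    (hx0 : ∀ i, h < i → x i = 0)
    (hxbig : ∀ i, 1 ≤ i → i ≤ h → 2 * σ ≤ |x i|)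
    (hy : ∀ i, y i = x i + σ * w i)
    (hb : ∀ i, b i = 1 + 2 * |y i|)
    (hyord : ∀ i j, 1 ≤ i → i ≤ j → j ≤ m → |y j| ≤ |y i|)
    (R : ℝ → ℝ)
    (hR : ∀ t, R t = ∑ i ∈ Finset.Icc 1 m,
      (max (t * b i - 1) 0 * Real.sign (y i) / 2 - x i) ^ 2)
    (tstar : ℝ)
    (htstar : tstar = ((∑ i ∈ Finset.Icc 1 m, b i) +
        2 * ∑ i ∈ Finset.Icc 1 m, Real.sign (y i) * b i * x i) /
      ∑ i ∈ Finset.Icc 1 m, (b i) ^ 2) :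
    1 / (1 + 2 * σ) ≤ tstar ∧ ∀ t ∈ Set.Icc (0 : ℝ) 1, R (min tstar 1) ≤ R t := by
  have hτpos : (0:ℝ) < 1 + 2 * σ := by linarith
  -- Per-index key facts
  have key : ∀ i ∈ Finset.Icc 1 m,
      (Real.sign (y i)) ^ 2 = 1 ∧ 0 ≤ Real.sign (y i) * x i ∧
      1 + 2 * σ ≤ b i ∧ b i ≤ (1 + 2 * σ) * (1 + 2 * (Real.sign (y i) * x i)) := by
    intro i hi
    rw [Finset.mem_Icc] at hi
    obtain ⟨hi1, hi2⟩ := hi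
    have hwi := hw i hi1 hi2
    have hyi := hy i
    have hbi := hb i
    by_cases hih : i ≤ h
    · have hxi := hxbig i hi1 hih
      have hσw : |σ * w i| = σ := by
        rcases hwi with hw1 | hw1
        · rw [hw1, mul_one, abs_of_pos hσ]
        · rw [hw1, mul_neg_one, abs_neg, abs_of_pos hσ]
      have hwlb : -σ ≤ σ * w i := by
        have h2 := neg_abs_le (σ * w i); rw [hσw] at h2; exact h2
      have hwub : σ * w i ≤ σ := by
        have h2 := le_abs_self (σ * w i); rw [hσw] at h2; exact h2
      have hyub : |y i| ≤ |x i| + σ := by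
        rw [hyi]
        calc |x i + σ * w i| ≤ |x i| + |σ * w i| := abs_add_le _ _
          _ = |x i| + σ := by rw [hσw]
      rcases abs_cases (x i) with ⟨hx1, hx2⟩ | ⟨hx1, hx2⟩
      · have hxpos : 2 * σ ≤ x i := by rw [← hx1]; exact hxi
        have hypos : 0 < y i := by rw [hyi]; linarith
        have hsy : Real.sign (y i) = 1 := Real.sign_of_pos hypos
        have hsx : Real.sign (y i) * x i = |x i| := by rw [hsy, one_mul, hx1]
        have hylb : σ ≤ |y i| := by rw [abs_of_pos hypos, hyi]; linarith
        refine ⟨by rw [hsy]; norm_num, by rw [hsx]; positivity, ?_, ?_⟩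
        · rw [hbi]; linarith
        · rw [hbi, hsx]
          nlinarith [mul_nonneg hσ.le (abs_nonneg (x i))]
      · have hxneg : x i ≤ -(2 * σ) := by
          have h2 : 2 * σ ≤ -x i := by rw [← hx1]; exact hxi
          linarith
        have hyneg : y i < 0 := by rw [hyi]; linarith
        have hsy : Real.sign (y i) = -1 := Real.sign_of_neg hyneg
        have hsx : Real.sign (y i) * x i = |x i| := by rw [hsy, hx1]; ring
        have hylb : σ ≤ |y i| := by rw [abs_of_neg hyneg, hyi]; linarith
        refine ⟨by rw [hsy]; norm_num, by rw [hsx]; positivity, ?_, ?_⟩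
        · rw [hbi]; linarith
        · rw [hbi, hsx]
          nlinarith [mul_nonneg hσ.le (abs_nonneg (x i))]
    · push_neg at hih
      have hx0i : x i = 0 := hx0 i hih
      have hyabs : |y i| = σ := by
        rcases hwi with hw1 | hw1
        · rw [hyi, hx0i, hw1, mul_one, zero_add, abs_of_pos hσ]
        · rw [hyi, hx0i, hw1, mul_neg_one, zero_add, abs_neg, abs_of_pos hσ]
      have hs2 : (Real.sign (y i)) ^ 2 = 1 := by
        rcases lt_trichotomy (y i) 0 with hlt | heq | hgt
        · rw [Real.sign_of_neg hlt]; norm_num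
        · exfalso; rw [heq] at hyabs; simp at hyabs; linarith
        · rw [Real.sign_of_pos hgt]; norm_num
      refine ⟨hs2, by rw [hx0i, mul_zero], ?_, ?_⟩
      · rw [hbi, hyabs]
      · rw [hbi, hyabs, hx0i, mul_zero]; nlinarith
  set B2 : ℝ := ∑ i ∈ Finset.Icc 1 m, (b i) ^ 2 with hB2
  set N : ℝ := ∑ i ∈ Finset.Icc 1 m, b i * (1 + 2 * (Real.sign (y i) * x i)) with hN
  clear_value B2 N
  have hne : (1 : ℕ) ∈ Finset.Icc 1 m := by
    rw [Finset.mem_Icc]; exact ⟨le_refl 1, by omega⟩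
  have hB2pos : 0 < B2 := by
    rw [hB2]
    apply Finset.sum_pos' (fun i hi => sq_nonneg _)
    refine ⟨1, hne, ?_⟩
    have hb1 : 0 < b 1 := by linarith [(key 1 hne).2.2.1]
    exact pow_pos hb1 2
  have hNrw : ((∑ i ∈ Finset.Icc 1 m, b i) +
      2 * ∑ i ∈ Finset.Icc 1 m, Real.sign (y i) * b i * x i) = N := by
    rw [hN, Finset.mul_sum, ← Finset.sum_add_distrib]
    apply Finset.sum_congr rfl
    intro i _
    ring
  have htstar' : tstar = N / B2 := by rw [htstar, hNrw]
  have htN : N = tstar * B2 := by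
    rw [htstar', div_mul_cancel₀ _ hB2pos.ne']
  have hNB : B2 ≤ (1 + 2 * σ) * N := by
    rw [hN, hB2, Finset.mul_sum]
    apply Finset.sum_le_sum
    intro i hi
    obtain ⟨hs2, hc0, hbl, hbu⟩ := key i hi
    nlinarith [mul_le_mul_of_nonneg_left hbu (by linarith : (0:ℝ) ≤ b i)]
  have part1 : 1 / (1 + 2 * σ) ≤ tstar := by
    rw [htstar', div_le_div_iff₀ hτpos hB2pos]
    linarith
  refine ⟨part1, ?_⟩
  -- The quadratic form of the loss
  set Qf : ℝ → ℝ := fun t => ∑ i ∈ Finset.Icc 1 m,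
    ((t * b i - 1) / 2 - Real.sign (y i) * x i) ^ 2 with hQf
  clear_value Qf
  have hτ1 : 1 / (1 + 2 * σ) ≤ 1 := by
    rw [div_le_one hτpos]; linarith
  have hRQ : ∀ t : ℝ, 1 / (1 + 2 * σ) ≤ t → R t = Qf t := by
    intro t ht
    have ht0 : 0 ≤ t := le_trans (by positivity) ht
    rw [hR t, hQf]
    apply Finset.sum_congr rfl
    intro i hi
    obtain ⟨hs2, hc0, hbl, hbu⟩ := key i hi
    have h1 : 1 ≤ t * (1 + 2 * σ) := (div_le_iff₀ hτpos).mp ht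
    have hmax : max (t * b i - 1) 0 = t * b i - 1 := by
      apply max_eq_left
      nlinarith
    rw [hmax]
    linear_combination ((t * b i - 1) ^ 2 / 4 - (x i) ^ 2) * hs2
  have hQd : ∀ u t : ℝ, Qf u - Qf t
      = (u - t) * (u + t) / 4 * B2 - (u - t) / 2 * N := by
    intro u t
    rw [hQf]
    simp only
    rw [← Finset.sum_sub_distrib]
    rw [show (u - t) * (u + t) / 4 * B2 - (u - t) / 2 * N
        = ∑ i ∈ Finset.Icc 1 m, ((u - t) * (u + t) / 4 * (b i) ^ 2
            - (u - t) / 2 * (b i * (1 + 2 * (Real.sign (y i) * x i)))) from by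
      rw [Finset.sum_sub_distrib, ← Finset.mul_sum, ← Finset.mul_sum, hB2, hN]]
    apply Finset.sum_congr rfl
    intro i hi
    ring
  have hcomp : ∀ t : ℝ, t ≤ 1 → Qf (min tstar 1) ≤ Qf t := by
    intro t ht2
    have hd := hQd (min tstar 1) t
    rw [htN] at hd
    rcases le_total tstar 1 with hc | hc
    · rw [min_eq_left hc] at hd ⊢
      nlinarith [mul_nonneg hB2pos.le (sq_nonneg (tstar - t))]
    · rw [min_eq_right hc] at hd ⊢
      nlinarith [mul_nonneg (mul_nonneg hB2pos.le (by linarith : (0:ℝ) ≤ 1 - t))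
        (by linarith : (0:ℝ) ≤ 2 * tstar - 1 - t)]
  have hmono : ∀ t : ℝ, 0 ≤ t → t ≤ 1 / (1 + 2 * σ) →
      R (1 / (1 + 2 * σ)) ≤ R t := by
    intro t ht0 ht1
    rw [hR, hR]
    apply Finset.sum_le_sum
    intro i hi
    obtain ⟨hs2, hc0, hbl, hbu⟩ := key i hi
    have hbpos : 0 < b i := by linarith
    have hid : ∀ u : ℝ, (max u 0 * Real.sign (y i) / 2 - x i) ^ 2
        = (max u 0 / 2 - Real.sign (y i) * x i) ^ 2 := fun u => by
      linear_combination ((max u 0) ^ 2 / 4 - (x i) ^ 2) * hs2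
    rw [hid, hid]
    have hτb0 : 0 ≤ 1 / (1 + 2 * σ) * b i - 1 := by
      rw [sub_nonneg, div_mul_eq_mul_div, le_div_iff₀ hτpos]
      linarith
    have hτmax : max (1 / (1 + 2 * σ) * b i - 1) 0 = 1 / (1 + 2 * σ) * b i - 1 :=
      max_eq_left hτb0
    rw [hτmax]
    have hg0 : 0 ≤ max (t * b i - 1) 0 := le_max_right _ _
    have hgle : max (t * b i - 1) 0 ≤ 1 / (1 + 2 * σ) * b i - 1 := by
      apply max_le _ hτb0
      have := mul_le_mul_of_nonneg_right ht1 hbpos.le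
      linarith
    have hglc : 1 / (1 + 2 * σ) * b i - 1 ≤ 2 * (Real.sign (y i) * x i) := by
      rw [div_mul_eq_mul_div, one_mul, sub_le_iff_le_add, div_le_iff₀ hτpos]
      nlinarith
    have hprod : 0 ≤ ((1 / (1 + 2 * σ) * b i - 1) - max (t * b i - 1) 0) *
        (2 * (Real.sign (y i) * x i)
          - (max (t * b i - 1) 0 + (1 / (1 + 2 * σ) * b i - 1)) / 2) :=
      mul_nonneg (by linarith) (by linarith)
    nlinarith [hprod]
  intro t ht
  obtain ⟨ht0, ht1⟩ := ht
  have hm0τ : 1 / (1 + 2 * σ) ≤ min tstar 1 := le_min part1 hτ1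
  rcases le_total (1 / (1 + 2 * σ)) t with hcase | hcase
  · rw [hRQ _ hm0τ, hRQ _ hcase]
    exact hcomp t ht1
  · calc R (min tstar 1) = Qf (min tstar 1) := hRQ _ hm0τ
      _ ≤ Qf (1 / (1 + 2 * σ)) := hcomp _ hτ1
      _ = R (1 / (1 + 2 * σ)) := (hRQ _ le_rfl).symm
      _ ≤ R t := hmono t ht0 hcase
end

section
/- In the Bernoulli-noise denoising setting, let Π be the m×m diagonal matrix projecting onto the first h coordinates, let Π̂ be any m×m orthogonal projection matrix (Π̂ᵀ = Π̂ and Π̂² = Π̂), and set x̂ = Π̂ y. Then t* := t*(x) and t̂* := t*(x̂) satisfy |t* − t̂*| ≤ 2( ‖Π − Π̂‖₂ ‖y‖₂ + σ√h ) / ‖b‖₂ ≤ 2‖Π − Π̂‖₂ ‖y‖₂ / √m + 2σ√(h/m), where ‖Π − Π̂‖₂ denotes the operator (spectral) norm. -/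
/-!
`t*(u)` is affine in `u` with slope vector `2 sgn(y) ∘ b / ‖b‖²`, so by Cauchy–Schwarz it is
`2 / ‖b‖`-Lipschitz for the Euclidean norm. Since `x` vanishes off the first `h` coordinates,
`x = Π x = Π (y - σ w)`, hence `x - x̂ = (Π - Π̂) y - σ Π w`, whose norm is at most
`‖Π - Π̂‖ ‖y‖ + σ √h`. Finally `‖b‖ ≥ √m` because every `bᵢ ≥ 1`.
-/

open Matrix Finset

section

variable {ι : Type*} [Fintype ι]

lemma norm_toLp_two_eq_sqrt_sum_sq (v : ι → ℝ) : ‖WithLp.toLp 2 v‖ = √(∑ i, v i ^ 2) := by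
  simp [EuclideanSpace.norm_eq]

lemma abs_sum_mul_mul_le_sqrt_mul_sqrt (s b d : ι → ℝ) (hs : ∀ i, |s i| ≤ 1) :
    |∑ i, s i * b i * d i| ≤ √(∑ i, b i ^ 2) * √(∑ i, d i ^ 2) := by
  have hsb : ∑ i, (s i * b i) ^ 2 ≤ ∑ i, b i ^ 2 := by
    refine sum_le_sum fun i _ => ?_
    rw [mul_pow, ← sq_abs (s i)]
    exact mul_le_of_le_one_left (sq_nonneg _) (pow_le_one₀ (abs_nonneg _) (hs i))
  calc |∑ i, s i * b i * d i| = √((∑ i, s i * b i * d i) ^ 2) := (Real.sqrt_sq_eq_abs _).symm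
    _ ≤ √((∑ i, (s i * b i) ^ 2) * ∑ i, d i ^ 2) :=
      Real.sqrt_le_sqrt (sum_mul_sq_le_sq_mul_sq _ _ _)
    _ ≤ √((∑ i, b i ^ 2) * ∑ i, d i ^ 2) := by gcongr
    _ = √(∑ i, b i ^ 2) * √(∑ i, d i ^ 2) := Real.sqrt_mul (by positivity) _

lemma card_le_sum_sq_of_one_le {b : ι → ℝ} (hb : ∀ i, 1 ≤ b i) :
    (Fintype.card ι : ℝ) ≤ ∑ i, b i ^ 2 := by
  calc (Fintype.card ι : ℝ) = ∑ _i : ι, (1 : ℝ) := by simp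
    _ ≤ ∑ i, b i ^ 2 := sum_le_sum fun i _ => one_le_pow₀ (hb i)

noncomputable def tStar (y b u : ι → ℝ) : ℝ :=
  ((∑ i, b i) + 2 * ∑ i, Real.sign (y i) * b i * u i) / ∑ i, b i ^ 2

lemma tStar_sub_tStar (y b u v : ι → ℝ) :
    tStar y b u - tStar y b v = 2 * (∑ i, Real.sign (y i) * b i * (u i - v i)) / ∑ i, b i ^ 2 := by
  simp only [tStar, mul_sub, sum_sub_distrib]
  ring

lemma abs_tStar_sub_tStar_le (y b u v : ι → ℝ) :
    |tStar y b u - tStar y b v| ≤ 2 * √(∑ i, (u i - v i) ^ 2) / √(∑ i, b i ^ 2) := by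
  have hsign : ∀ i, |Real.sign (y i)| ≤ 1 := fun i => by
    rcases Real.sign_apply_eq (y i) with h | h | h <;> simp [h]
  have hD : 0 ≤ ∑ i, b i ^ 2 := by positivity
  rw [tStar_sub_tStar, abs_div, abs_mul, abs_two, abs_of_nonneg hD]
  calc 2 * |∑ i, Real.sign (y i) * b i * (u i - v i)| / ∑ i, b i ^ 2
      ≤ 2 * (√(∑ i, b i ^ 2) * √(∑ i, (u i - v i) ^ 2)) / ∑ i, b i ^ 2 := by
        gcongr
        exact abs_sum_mul_mul_le_sqrt_mul_sqrt _ _ _ hsign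
    _ = 2 * √(∑ i, (u i - v i) ^ 2) / √(∑ i, b i ^ 2) := by
        rw [mul_comm (√_), ← mul_assoc, mul_div_assoc, Real.sqrt_div_self']
        ring

variable [DecidableEq ι] (p : ι → Prop) [DecidablePred p]

lemma diagonal_indicator_mulVec_of_support {x : ι → ℝ} (hx : ∀ i, ¬ p i → x i = 0) :
    diagonal (fun i => if p i then (1 : ℝ) else 0) *ᵥ x = x := by
  ext i
  by_cases hi : p i <;> simp [mulVec_diagonal, hi, hx]

lemma norm_diagonal_indicator_mulVec_of_sq_eq_one {w : ι → ℝ} (hw : ∀ i, w i ^ 2 = 1) :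
    ‖WithLp.toLp 2 (diagonal (fun i => if p i then (1 : ℝ) else 0) *ᵥ w)‖ = √(#{i | p i}) := by
  rw [norm_toLp_two_eq_sqrt_sum_sq, ← sum_boole]
  congr 1
  refine sum_congr rfl fun i _ => ?_
  by_cases hi : p i <;> simp [mulVec_diagonal, hi, hw]

end

lemma norm_toLp_mulVec_le {n : Type*} [Fintype n] [DecidableEq n] (A : Matrix n n ℝ) (v : n → ℝ) :
    ‖WithLp.toLp 2 (A *ᵥ v)‖ ≤ ‖(toEuclideanLin A).toContinuousLinearMap‖ * ‖WithLp.toLp 2 v‖ :=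
  (toEuclideanLin A).toContinuousLinearMap.le_opNorm (WithLp.toLp 2 v)

lemma sqrt_sum_sq_sub_mulVec_le {m h : ℕ} (hhm : h ≤ m) {σ : ℝ} (hσ : 0 ≤ σ)
    {x w y : Fin m → ℝ} (hw : ∀ i, w i ^ 2 = 1) (hx0 : ∀ i : Fin m, h ≤ (i : ℕ) → x i = 0)
    (hy : ∀ i, y i = x i + σ * w i) (Phat : Matrix (Fin m) (Fin m) ℝ) :
    √(∑ i, (x i - (Phat *ᵥ y) i) ^ 2) ≤
      ‖(toEuclideanLin (diagonal (fun i : Fin m => if (i : ℕ) < h then (1 : ℝ) else 0) -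
          Phat)).toContinuousLinearMap‖ * √(∑ i, y i ^ 2) + σ * √h := by
  set P := diagonal fun i : Fin m => if (i : ℕ) < h then (1 : ℝ) else 0
  have hPx : P *ᵥ x = x := diagonal_indicator_mulVec_of_support _ fun i hi => hx0 i (not_lt.1 hi)
  have hPw : ‖WithLp.toLp 2 (P *ᵥ w)‖ = √h := by
    rw [norm_diagonal_indicator_mulVec_of_sq_eq_one _ hw, Fin.card_filter_val_lt,
      min_eq_right hhm]
  have hx : x = y - σ • w := funext fun i => by simp [hy]
  have hdecomp : x - Phat *ᵥ y = (P - Phat) *ᵥ y - σ • (P *ᵥ w) := by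
    calc x - Phat *ᵥ y = P *ᵥ x - Phat *ᵥ y := by rw [hPx]
      _ = _ := by rw [hx, mulVec_sub, mulVec_smul, sub_mulVec]; abel
  calc √(∑ i, (x i - (Phat *ᵥ y) i) ^ 2) = ‖WithLp.toLp 2 (x - Phat *ᵥ y)‖ :=
        (norm_toLp_two_eq_sqrt_sum_sq _).symm
    _ ≤ ‖WithLp.toLp 2 ((P - Phat) *ᵥ y)‖ + ‖σ • WithLp.toLp 2 (P *ᵥ w)‖ := by
        rw [hdecomp, WithLp.toLp_sub, WithLp.toLp_smul]; exact norm_sub_le _ _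
    _ ≤ _ := by
        rw [norm_smul, Real.norm_of_nonneg hσ, hPw, ← norm_toLp_two_eq_sqrt_sum_sq]
        gcongr
        exact norm_toLp_mulVec_le _ _

theorem bernoulliNoise_parameter_error_projection_general (m h : ℕ) (hhm : h < m)
    (σ : ℝ) (hσ : 0 < σ) (x w y b xhat : Fin m → ℝ)
    (hw : ∀ i, w i = 1 ∨ w i = -1)
    (hx0 : ∀ i : Fin m, h ≤ (i : ℕ) → x i = 0)
    (hy : ∀ i, y i = x i + σ * w i)
    (hb : ∀ i, b i = 1 + 2 * |y i|)
    (Pmat Phat : Matrix (Fin m) (Fin m) ℝ)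
    (hP : Pmat = Matrix.diagonal (fun i : Fin m => if (i : ℕ) < h then (1 : ℝ) else 0))
    (hxhat : xhat = Phat.mulVec y)
    (tstar tstarhat : ℝ)
    (htstar : tstar = ((∑ i, b i) + 2 * ∑ i, Real.sign (y i) * b i * x i) / ∑ i, (b i) ^ 2)
    (htstarhat : tstarhat =
      ((∑ i, b i) + 2 * ∑ i, Real.sign (y i) * b i * xhat i) / ∑ i, (b i) ^ 2) :
    |tstar - tstarhat| ≤
      2 * (‖(Matrix.toEuclideanLin (Pmat - Phat)).toContinuousLinearMap‖ *
            Real.sqrt (∑ i, (y i) ^ 2) + σ * Real.sqrt h) / Real.sqrt (∑ i, (b i) ^ 2) ∧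
    2 * (‖(Matrix.toEuclideanLin (Pmat - Phat)).toContinuousLinearMap‖ *
            Real.sqrt (∑ i, (y i) ^ 2) + σ * Real.sqrt h) / Real.sqrt (∑ i, (b i) ^ 2) ≤
      2 * ‖(Matrix.toEuclideanLin (Pmat - Phat)).toContinuousLinearMap‖ *
          Real.sqrt (∑ i, (y i) ^ 2) / Real.sqrt m +
        2 * σ * Real.sqrt ((h : ℝ) / m) := by
  subst hxhat
  set N := ‖(toEuclideanLin (Pmat - Phat)).toContinuousLinearMap‖
  have hm : √m ≤ √(∑ i, b i ^ 2) := by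
    have hb1 : ∀ i, 1 ≤ b i := fun i => by rw [hb]; linarith [abs_nonneg (y i)]
    simpa using Real.sqrt_le_sqrt (card_le_sum_sq_of_one_le hb1)
  have herr := sqrt_sum_sq_sub_mulVec_le hhm.le hσ.le
    (fun i => by rcases hw i with hwi | hwi <;> simp [hwi]) hx0 hy Phat
  rw [← hP] at herr
  refine ⟨?_, ?_⟩
  · calc |tstar - tstarhat| = |tStar y b x - tStar y b (Phat *ᵥ y)| := by
          rw [htstar, htstarhat]; rfl
      _ ≤ 2 * √(∑ i, (x i - (Phat *ᵥ y) i) ^ 2) / √(∑ i, b i ^ 2) :=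
          abs_tStar_sub_tStar_le y b x (Phat *ᵥ y)
      _ ≤ _ := by gcongr
  · calc _ ≤ 2 * (N * √(∑ i, y i ^ 2) + σ * √h) / √m := by
          gcongr
          exact Real.sqrt_pos.2 (by exact_mod_cast hhm.pos)
      _ = _ := by rw [Real.sqrt_div (Nat.cast_nonneg h)]; ring

/-- Theorem 3.3 (deterministic estimate): in the Bernoulli-noise setting, with `Π` the
projection onto the first `h` coordinates, `Π̂` any orthogonal projection matrix and
`x̂ = Π̂ y`, the parameters `t* = t*(x)`, `t̂* = t*(x̂)` satisfy
`|t* - t̂*| ≤ 2(‖Π - Π̂‖₂‖y‖₂ + σ√h)/‖b‖₂ ≤ 2‖Π - Π̂‖₂‖y‖₂/√m + 2σ√(h/m)`. -/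
theorem bernoulliNoise_parameter_error_projection (m h : ℕ) (hh : 1 ≤ h) (hhm : h < m)
    (σ : ℝ) (hσ : 0 < σ) (x w y b xhat : Fin m → ℝ)
    (hw : ∀ i, w i = 1 ∨ w i = -1)
    (hx0 : ∀ i : Fin m, h ≤ (i : ℕ) → x i = 0)
    (hxbig : ∀ i : Fin m, (i : ℕ) < h → 2 * σ ≤ |x i|)
    (hy : ∀ i, y i = x i + σ * w i)
    (hb : ∀ i, b i = 1 + 2 * |y i|)
    (Pmat Phat : Matrix (Fin m) (Fin m) ℝ)
    (hP : Pmat = Matrix.diagonal (fun i : Fin m => if (i : ℕ) < h then (1 : ℝ) else 0))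
    (hPhatSymm : Phatᵀ = Phat) (hPhatIdem : Phat * Phat = Phat)
    (hxhat : xhat = Phat.mulVec y)
    (tstar tstarhat : ℝ)
    (htstar : tstar = ((∑ i, b i) + 2 * ∑ i, Real.sign (y i) * b i * x i) / ∑ i, (b i) ^ 2)
    (htstarhat : tstarhat =
      ((∑ i, b i) + 2 * ∑ i, Real.sign (y i) * b i * xhat i) / ∑ i, (b i) ^ 2) :
    |tstar - tstarhat| ≤
      2 * (‖(Matrix.toEuclideanLin (Pmat - Phat)).toContinuousLinearMap‖ *
            Real.sqrt (∑ i, (y i) ^ 2) + σ * Real.sqrt h) / Real.sqrt (∑ i, (b i) ^ 2) ∧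
    2 * (‖(Matrix.toEuclideanLin (Pmat - Phat)).toContinuousLinearMap‖ *
            Real.sqrt (∑ i, (y i) ^ 2) + σ * Real.sqrt h) / Real.sqrt (∑ i, (b i) ^ 2) ≤
      2 * ‖(Matrix.toEuclideanLin (Pmat - Phat)).toContinuousLinearMap‖ *
          Real.sqrt (∑ i, (y i) ^ 2) / Real.sqrt m +
        2 * σ * Real.sqrt ((h : ℝ) / m) :=
  bernoulliNoise_parameter_error_projection_general m h hhm σ hσ x w y b xhat hw hx0 hy hb Pmat Phat
    hP hxhat tstar tstarhat htstar htstarhat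
end

section
/- Let Σ and Σ̂ be symmetric linear maps on the Euclidean space ℝ^m, let α* ∈ ℝ and γ > 0, and assume every eigenvalue of Σ lies in (−∞, α* − γ] ∪ [α*, ∞). Let Π be the orthogonal projection onto the sum of the eigenspaces of Σ corresponding to eigenvalues ≥ α*, and let Π̂ be the orthogonal projection onto the sum of the eigenspaces of Σ̂ corresponding to eigenvalues > α* − γ/2. If ‖Σ̂ − Σ‖ < γ/2 (operator norm), then ‖Π̂ − Π‖ ≤ (2/γ) ‖Σ̂ − Σ‖. -/
/-!
Write `P, Q` for the orthogonal projections onto `K, Kᗮ` and `P̂, Q̂` for those onto `K̂, K̂ᗮ`.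
Then `P̂ - P = P̂ Q - Q̂ P`, where the two terms have orthogonal ranges and see orthogonal parts of
the input, so `‖P̂ - P‖ ≤ max ‖P̂ Q‖ ‖Q̂ P‖`. Both are Davis–Kahan `sin θ` bounds. For `Q̂ P`: the
form of `S` is `≥ α*` on the `S`-invariant space `K`, that of `Ŝ` is `≤ α* - γ/2` on the
`Ŝ`-invariant space `K̂ᗮ`, and pairing `(Ŝ - S) v` with `Q̂ v` for a right singular vector `v ∈ K`
of `Q̂ P` gives `(γ/2) ‖Q̂ P‖ ≤ ‖Ŝ - S‖`. The bound for `P̂ Q` is the mirror image, with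
`S ≤ α* - γ` on `Kᗮ` and `Ŝ ≥ α* - γ/2` on `K̂`.
-/

open Module Module.End Submodule
open scoped InnerProductSpace RealInnerProductSpace

theorem Module.End.iSup_eigenspace_mem_invtSubmodule {R M : Type*} [CommRing R]
    [AddCommGroup M] [Module R M] (f : End R M) (A : Set R) :
    (⨆ μ ∈ A, eigenspace f μ) ∈ f.invtSubmodule :=
  iSup₂_le fun μ hμ => (eigenspace_mem_invtSubmodule f μ).trans
    (Submodule.comap_mono (le_iSup₂ (f := fun μ _ => eigenspace f μ) μ hμ))

namespace LinearMap.IsSymmetric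

variable {E : Type*} [NormedAddCommGroup E] [InnerProductSpace ℝ E] [FiniteDimensional ℝ E]
  {T : E →ₗ[ℝ] E} {n : ℕ}

theorem inner_map_self_sub_mul_norm_sq (hT : T.IsSymmetric) (hn : finrank ℝ E = n) (c : ℝ)
    (x : E) :
    ⟪T x, x⟫ - c * ‖x‖ ^ 2 =
      ∑ i, (hT.eigenvalues hn i - c) * ⟪hT.eigenvectorBasis hn i, x⟫ ^ 2 := by
  set b := hT.eigenvectorBasis hn
  have hTx : ⟪T x, x⟫ = ∑ i, hT.eigenvalues hn i * ⟪b i, x⟫ ^ 2 := by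
    rw [← b.sum_inner_mul_inner (T x) x]
    refine Finset.sum_congr rfl fun i _ => ?_
    rw [hT x (b i), hT.apply_eigenvectorBasis, real_inner_smul_right, real_inner_comm x]
    simp only [Real.ringHom_apply]; ring
  rw [hTx, ← b.sum_sq_inner_right x, Finset.mul_sum, ← Finset.sum_sub_distrib]
  exact Finset.sum_congr rfl fun i _ => by ring

theorem mul_norm_sq_le_inner_map_self (hT : T.IsSymmetric) (hn : finrank ℝ E = n) {c : ℝ}
    {x : E} (hc : ∀ i, ⟪hT.eigenvectorBasis hn i, x⟫ ≠ 0 → c ≤ hT.eigenvalues hn i) :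
    c * ‖x‖ ^ 2 ≤ ⟪T x, x⟫ := by
  rw [← sub_nonneg, hT.inner_map_self_sub_mul_norm_sq hn]
  refine Finset.sum_nonneg fun i _ => ?_
  by_cases hi : ⟪hT.eigenvectorBasis hn i, x⟫ = 0
  · simp [hi]
  · exact mul_nonneg (sub_nonneg.2 (hc i hi)) (sq_nonneg _)

theorem inner_map_self_le_mul_norm_sq (hT : T.IsSymmetric) (hn : finrank ℝ E = n) {c : ℝ}
    {x : E} (hc : ∀ i, ⟪hT.eigenvectorBasis hn i, x⟫ ≠ 0 → hT.eigenvalues hn i ≤ c) :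
    ⟪T x, x⟫ ≤ c * ‖x‖ ^ 2 := by
  rw [← sub_nonpos, hT.inner_map_self_sub_mul_norm_sq hn]
  refine Finset.sum_nonpos fun i _ => ?_
  by_cases hi : ⟪hT.eigenvectorBasis hn i, x⟫ = 0
  · simp [hi]
  · exact mul_nonpos_of_nonpos_of_nonneg (sub_nonpos.2 (hc i hi)) (sq_nonneg _)

theorem inner_eigenvectorBasis_eq_zero_of_mem_iSup (hT : T.IsSymmetric) (hn : finrank ℝ E = n)
    {A : Set ℝ} {x : E} (hx : x ∈ ⨆ μ ∈ A, eigenspace T μ) {i : Fin n}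
    (hi : hT.eigenvalues hn i ∉ A) : ⟪hT.eigenvectorBasis hn i, x⟫ = 0 := by
  have hle : (⨆ μ ∈ A, eigenspace T μ) ≤ (eigenspace T (hT.eigenvalues hn i))ᗮ :=
    iSup₂_le fun μ hμ => Submodule.isOrtho_iff_le.1
      (hT.orthogonalFamily_eigenspaces.isOrtho fun h => hi (h ▸ hμ))
  exact Submodule.inner_right_of_mem_orthogonal
    (hT.hasEigenvector_eigenvectorBasis hn i).1 (hle hx)

theorem mul_norm_sq_le_inner_map_self_of_mem_iSup (hT : T.IsSymmetric) {A : Set ℝ} {c : ℝ}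
    (hc : ∀ μ ∈ A, HasEigenvalue T μ → c ≤ μ) {x : E} (hx : x ∈ ⨆ μ ∈ A, eigenspace T μ) :
    c * ‖x‖ ^ 2 ≤ ⟪T x, x⟫ :=
  hT.mul_norm_sq_le_inner_map_self rfl fun i hi =>
    hc _ (not_not.1 (mt (hT.inner_eigenvectorBasis_eq_zero_of_mem_iSup rfl hx) hi))
      (hT.hasEigenvalue_eigenvalues rfl i)

theorem inner_map_self_le_mul_norm_sq_of_mem_orthogonal_iSup (hT : T.IsSymmetric) {A : Set ℝ}
    {c : ℝ} (hc : ∀ μ ∉ A, HasEigenvalue T μ → μ ≤ c) {x : E}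
    (hx : x ∈ (⨆ μ ∈ A, eigenspace T μ)ᗮ) :
    ⟪T x, x⟫ ≤ c * ‖x‖ ^ 2 := by
  refine hT.inner_map_self_le_mul_norm_sq rfl fun i hi => hc _ (fun hA => hi ?_)
    (hT.hasEigenvalue_eigenvalues rfl i)
  exact Submodule.inner_right_of_mem_orthogonal
    (le_iSup₂ (f := fun μ _ => eigenspace T μ) _ hA (hT.hasEigenvector_eigenvectorBasis rfl i).1) hx

end LinearMap.IsSymmetric

namespace Submodule

variable {E : Type*} [NormedAddCommGroup E] [InnerProductSpace ℝ E] {U V : Submodule ℝ E}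

theorem norm_sq_starProjection_of_starProjection_eq_smul [U.HasOrthogonalProjection]
    [V.HasOrthogonalProjection] {x : E} (hx : x ∈ V) {t : ℝ}
    (hxt : V.starProjection (U.starProjection x) = t • x) :
    ‖U.starProjection x‖ ^ 2 = t * ‖x‖ ^ 2 := by
  have hxV : ⟪x, U.starProjection x⟫ = ⟪x, V.starProjection (U.starProjection x)⟫ := by
    rw [← V.inner_starProjection_left_eq_right, starProjection_eq_self_iff.2 hx]
  rw [← real_inner_self_eq_norm_sq, inner_starProjection_left_eq_right,
    starProjection_eq_self_iff.2 (U.starProjection_apply_mem x), hxV, hxt, real_inner_smul_right,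
    real_inner_self_eq_norm_sq]

theorem norm_starProjection_sub_starProjection_le [U.HasOrthogonalProjection]
    [V.HasOrthogonalProjection] {M : ℝ} (hUV : ‖U.starProjection * Vᗮ.starProjection‖ ≤ M)
    (hVU : ‖Uᗮ.starProjection * V.starProjection‖ ≤ M) :
    ‖U.starProjection - V.starProjection‖ ≤ M := by
  have hM : 0 ≤ M := (norm_nonneg _).trans hUV
  refine ContinuousLinearMap.opNorm_le_bound _ hM fun x => ?_
  have hsplit : (U.starProjection - V.starProjection) x =
      U.starProjection (Vᗮ.starProjection x) - Uᗮ.starProjection (V.starProjection x) := by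
    simp only [sub_apply, starProjection_orthogonal_val, map_sub]
    abel
  have horth : ⟪U.starProjection (Vᗮ.starProjection x), Uᗮ.starProjection (V.starProjection x)⟫
      = 0 :=
    inner_right_of_mem_orthogonal (U.starProjection_apply_mem _) (Uᗮ.starProjection_apply_mem _)
  have h₁ : ‖U.starProjection (Vᗮ.starProjection x)‖ ≤ M * ‖Vᗮ.starProjection x‖ := by
    have := (U.starProjection * Vᗮ.starProjection).le_of_opNorm_le hUV (Vᗮ.starProjection x)
    rwa [mul_apply_eq_comp, starProjection_eq_self_iff.2 (Vᗮ.starProjection_apply_mem x)] at this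
  have h₂ : ‖Uᗮ.starProjection (V.starProjection x)‖ ≤ M * ‖V.starProjection x‖ := by
    have := (Uᗮ.starProjection * V.starProjection).le_of_opNorm_le hVU (V.starProjection x)
    rwa [mul_apply_eq_comp, starProjection_eq_self_iff.2 (V.starProjection_apply_mem x)] at this
  refine (pow_le_pow_iff_left₀ (norm_nonneg _) (by positivity) two_ne_zero).1 ?_
  calc ‖(U.starProjection - V.starProjection) x‖ ^ 2
      = ‖U.starProjection (Vᗮ.starProjection x)‖ ^ 2
        + ‖Uᗮ.starProjection (V.starProjection x)‖ ^ 2 := by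
        rw [hsplit, norm_sub_sq_real, horth]; ring
    _ ≤ (M * ‖Vᗮ.starProjection x‖) ^ 2 + (M * ‖V.starProjection x‖) ^ 2 := by gcongr
    _ = (M * ‖x‖) ^ 2 := by
        rw [mul_pow, mul_pow, mul_pow, norm_sq_eq_add_norm_sq_starProjection x V]; ring

variable [FiniteDimensional ℝ E] {A B : E →L[ℝ] E} {a b : ℝ}

theorem norm_starProjection_le_of_starProjection_eq_smul (hA : IsSelfAdjoint A)
    (hAU : U ∈ invtSubmodule (A : E →ₗ[ℝ] E)) (hBV : V ∈ invtSubmodule (B : E →ₗ[ℝ] E))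
    (hab : a < b) (ha : ∀ u ∈ U, ⟪A u, u⟫ ≤ a * ‖u‖ ^ 2) (hb : ∀ v ∈ V, b * ‖v‖ ^ 2 ≤ ⟪B v, v⟫)
    {x : E} (hx : x ∈ V) {t : ℝ} (ht : 0 ≤ t)
    (hxt : V.starProjection (U.starProjection x) = t • x) :
    ‖U.starProjection x‖ ≤ ‖A - B‖ / (b - a) * ‖x‖ := by
  set w := U.starProjection x
  have hAw_mem : A w ∈ U := hAU (U.starProjection_apply_mem x)
  have hBx_mem : B x ∈ V := hBV hx
  have hAw : ⟪A x, w⟫ = ⟪A w, w⟫ :=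
    calc ⟪A x, w⟫ = ⟪x, A w⟫ := hA.isSymmetric x w
      _ = ⟪w, A w⟫ := by
        rw [U.inner_starProjection_left_eq_right, starProjection_eq_self_iff.2 hAw_mem]
      _ = ⟪A w, w⟫ := real_inner_comm _ _
  have hBw : ⟪B x, w⟫ = t * ⟪B x, x⟫ :=
    calc ⟪B x, w⟫ = ⟪V.starProjection (B x), w⟫ := by rw [starProjection_eq_self_iff.2 hBx_mem]
      _ = t * ⟪B x, x⟫ := by rw [V.inner_starProjection_left_eq_right, hxt, real_inner_smul_right]
  have key : (b - a) * ‖w‖ * ‖w‖ ≤ ‖A - B‖ * ‖x‖ * ‖w‖ :=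
    calc (b - a) * ‖w‖ * ‖w‖ = t * (b * ‖x‖ ^ 2) - a * ‖w‖ ^ 2 := by
          rw [mul_assoc, ← sq, norm_sq_starProjection_of_starProjection_eq_smul hx hxt]; ring
      _ ≤ t * ⟪B x, x⟫ - ⟪A w, w⟫ := by
          gcongr
          · exact hb x hx
          · exact ha w (U.starProjection_apply_mem x)
      _ = -⟪(A - B) x, w⟫ := by
          rw [sub_apply, inner_sub_left, hAw, hBw]; ring
      _ ≤ ‖(A - B) x‖ * ‖w‖ := (neg_le_abs _).trans (abs_real_inner_le_norm _ _)
      _ ≤ ‖A - B‖ * ‖x‖ * ‖w‖ := by gcongr; exact (A - B).le_opNorm x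
  rw [div_mul_eq_mul_div, le_div_iff₀ (sub_pos.2 hab)]
  rcases (norm_nonneg w).eq_or_lt with hw | hw
  · rw [← hw, zero_mul]; positivity
  · linarith [le_of_mul_le_mul_right key hw]

theorem norm_starProjection_mul_starProjection_le (hA : IsSelfAdjoint A)
    (hAU : U ∈ invtSubmodule (A : E →ₗ[ℝ] E)) (hBV : V ∈ invtSubmodule (B : E →ₗ[ℝ] E))
    (hab : a < b) (ha : ∀ u ∈ U, ⟪A u, u⟫ ≤ a * ‖u‖ ^ 2) (hb : ∀ v ∈ V, b * ‖v‖ ^ 2 ≤ ⟪B v, v⟫) :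
    ‖U.starProjection * V.starProjection‖ ≤ ‖A - B‖ / (b - a) := by
  set M := ‖A - B‖ / (b - a)
  have hM : 0 ≤ M := div_nonneg (norm_nonneg _) (sub_pos.2 hab).le
  set T := V.starProjection * U.starProjection * V.starProjection
  -- eigenvectors of `T` are right singular vectors of `U.starProjection * V.starProjection`
  have hT : (T : E →ₗ[ℝ] E).IsSymmetric :=
    ((isSelfAdjoint_starProjection U).conjugate_self (isSelfAdjoint_starProjection V)).isSymmetric
  have heig : ∀ i, hT.eigenvalues rfl i ≤ M ^ 2 := by
    intro i
    set e := hT.eigenvectorBasis rfl i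
    set t := hT.eigenvalues rfl i
    rcases le_or_gt t 0 with ht | ht
    · exact ht.trans (sq_nonneg M)
    have hTe : T e = t • e := hT.apply_eigenvectorBasis rfl i
    have he : e ∈ V := by
      rw [← inv_smul_smul₀ ht.ne' e, ← hTe]
      exact V.smul_mem _ (V.starProjection_apply_mem _)
    have hxt : V.starProjection (U.starProjection e) = t • e := by
      rw [← hTe, mul_apply_eq_comp, mul_apply_eq_comp, starProjection_eq_self_iff.2 he]
    have he1 : ‖e‖ = 1 := (hT.eigenvectorBasis rfl).orthonormal.1 i
    have hbound :=
      norm_starProjection_le_of_starProjection_eq_smul hA hAU hBV hab ha hb he ht.le hxt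
    have hsq := norm_sq_starProjection_of_starProjection_eq_smul he hxt
    rw [he1, mul_one] at hbound
    rw [he1, one_pow, mul_one] at hsq
    exact hsq ▸ pow_le_pow_left₀ (norm_nonneg _) hbound 2
  refine ContinuousLinearMap.opNorm_le_bound _ hM fun x => ?_
  refine (pow_le_pow_iff_left₀ (norm_nonneg _) (by positivity) two_ne_zero).1 ?_
  have hTx : ‖(U.starProjection * V.starProjection) x‖ ^ 2 = ⟪T x, x⟫ := by
    simp only [T, mul_apply_eq_comp]
    rw [V.inner_starProjection_left_eq_right, real_inner_comm, ← real_inner_self_eq_norm_sq,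
      U.inner_starProjection_left_eq_right,
      starProjection_eq_self_iff.2 (U.starProjection_apply_mem _)]
  rw [hTx, mul_pow]
  exact hT.inner_map_self_le_mul_norm_sq rfl fun i _ => heig i

theorem norm_starProjection_mul_starProjection_le' (hA : IsSelfAdjoint A)
    (hAU : U ∈ invtSubmodule (A : E →ₗ[ℝ] E)) (hBV : V ∈ invtSubmodule (B : E →ₗ[ℝ] E))
    (hab : b < a) (ha : ∀ u ∈ U, a * ‖u‖ ^ 2 ≤ ⟪A u, u⟫) (hb : ∀ v ∈ V, ⟪B v, v⟫ ≤ b * ‖v‖ ^ 2) :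
    ‖U.starProjection * V.starProjection‖ ≤ ‖A - B‖ / (a - b) := by
  have hAU' : U ∈ invtSubmodule ((-A : E →L[ℝ] E) : E →ₗ[ℝ] E) :=
    fun u hu => U.neg_mem (hAU hu)
  have hBV' : V ∈ invtSubmodule ((-B : E →L[ℝ] E) : E →ₗ[ℝ] E) :=
    fun v hv => V.neg_mem (hBV hv)
  have := norm_starProjection_mul_starProjection_le hA.neg hAU' hBV' (neg_lt_neg hab)
    (fun u hu => by simp only [neg_apply, inner_neg_left]; linarith [ha u hu])
    (fun v hv => by simp only [neg_apply, inner_neg_left]; linarith [hb v hv])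
  rwa [← neg_sub', norm_neg, neg_sub_neg] at this

end Submodule

theorem spectral_projection_perturbation_general {m : ℕ}
    (S Shat : EuclideanSpace ℝ (Fin m) →L[ℝ] EuclideanSpace ℝ (Fin m))
    (hS : IsSelfAdjoint S) (hShat : IsSelfAdjoint Shat)
    (αstar γ : ℝ) (hγ : 0 < γ)
    (hgap : ∀ μ : ℝ, Module.End.HasEigenvalue
      (S : EuclideanSpace ℝ (Fin m) →ₗ[ℝ] EuclideanSpace ℝ (Fin m)) μ →
        μ ≤ αstar - γ ∨ αstar ≤ μ)
    (K Khat : Submodule ℝ (EuclideanSpace ℝ (Fin m)))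
    (hK : K = ⨆ μ ∈ {μ : ℝ | αstar ≤ μ}, Module.End.eigenspace
      (S : EuclideanSpace ℝ (Fin m) →ₗ[ℝ] EuclideanSpace ℝ (Fin m)) μ)
    (hKhat : Khat = ⨆ μ ∈ {μ : ℝ | αstar - γ / 2 < μ}, Module.End.eigenspace
      (Shat : EuclideanSpace ℝ (Fin m) →ₗ[ℝ] EuclideanSpace ℝ (Fin m)) μ)
    (P Phat : EuclideanSpace ℝ (Fin m) →L[ℝ] EuclideanSpace ℝ (Fin m))
    (hP : ∀ v, P v = K.orthogonalProjectionOnto v)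
    (hPhat : ∀ v, Phat v = Khat.orthogonalProjectionOnto v) :
    ‖Phat - P‖ ≤ (2 / γ) * ‖Shat - S‖ := by
  obtain rfl : P = K.starProjection := ContinuousLinearMap.ext hP
  obtain rfl : Phat = Khat.starProjection := ContinuousLinearMap.ext hPhat
  have hSK : K ∈ invtSubmodule (S : _ →ₗ[ℝ] _) :=
    hK ▸ iSup_eigenspace_mem_invtSubmodule _ _
  have hShatKhat : Khat ∈ invtSubmodule (Shat : _ →ₗ[ℝ] _) :=
    hKhat ▸ iSup_eigenspace_mem_invtSubmodule _ _
  have hK_ge : ∀ x ∈ K, αstar * ‖x‖ ^ 2 ≤ ⟪S x, x⟫ := fun x hx =>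
    hS.isSymmetric.mul_norm_sq_le_inner_map_self_of_mem_iSup (fun _ hμ _ => hμ) (hK ▸ hx)
  have hKperp_le : ∀ x ∈ Kᗮ, ⟪S x, x⟫ ≤ (αstar - γ) * ‖x‖ ^ 2 := fun x hx =>
    hS.isSymmetric.inner_map_self_le_mul_norm_sq_of_mem_orthogonal_iSup
      (fun μ hμ hμS => (hgap μ hμS).resolve_right hμ) (hK ▸ hx)
  have hKhat_ge : ∀ x ∈ Khat, (αstar - γ / 2) * ‖x‖ ^ 2 ≤ ⟪Shat x, x⟫ := fun x hx =>
    hShat.isSymmetric.mul_norm_sq_le_inner_map_self_of_mem_iSup (fun _ hμ _ => hμ.le) (hKhat ▸ hx)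
  have hKhatperp_le : ∀ x ∈ Khatᗮ, ⟪Shat x, x⟫ ≤ (αstar - γ / 2) * ‖x‖ ^ 2 := fun x hx =>
    hShat.isSymmetric.inner_map_self_le_mul_norm_sq_of_mem_orthogonal_iSup
      (fun _ hμ _ => not_lt.1 hμ) (hKhat ▸ hx)
  have h₁ := norm_starProjection_mul_starProjection_le hShat
    (hShat.isSymmetric.orthogonalComplement_mem_invtSubmodule hShatKhat) hSK (by linarith)
    hKhatperp_le hK_ge
  have h₂ := norm_starProjection_mul_starProjection_le' hShat hShatKhat
    (hS.isSymmetric.orthogonalComplement_mem_invtSubmodule hSK) (by linarith) hKhat_ge hKperp_le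
  rw [show αstar - (αstar - γ / 2) = γ / 2 by ring] at h₁
  rw [show αstar - γ / 2 - (αstar - γ) = γ / 2 by ring] at h₂
  calc ‖Khat.starProjection - K.starProjection‖ ≤ ‖Shat - S‖ / (γ / 2) :=
        norm_starProjection_sub_starProjection_le h₂ h₁
    _ = 2 / γ * ‖Shat - S‖ := by ring

/-- Equation (7) / Lemma 2.2 (deterministic spectral perturbation bound): if the symmetric
map `S` has no eigenvalue in `(α* - γ, α*)`, `P` is the orthogonal projection onto the sum
of eigenspaces of `S` for eigenvalues `≥ α*`, `P̂` the orthogonal projection onto the sum of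
eigenspaces of `Ŝ` for eigenvalues `> α* - γ/2`, and `‖Ŝ - S‖ < γ/2`, then
`‖P̂ - P‖ ≤ (2/γ)‖Ŝ - S‖`. -/
theorem spectral_projection_perturbation {m : ℕ}
    (S Shat : EuclideanSpace ℝ (Fin m) →L[ℝ] EuclideanSpace ℝ (Fin m))
    (hS : IsSelfAdjoint S) (hShat : IsSelfAdjoint Shat)
    (αstar γ : ℝ) (hγ : 0 < γ)
    (hgap : ∀ μ : ℝ, Module.End.HasEigenvalue
      (S : EuclideanSpace ℝ (Fin m) →ₗ[ℝ] EuclideanSpace ℝ (Fin m)) μ →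
        μ ≤ αstar - γ ∨ αstar ≤ μ)
    (K Khat : Submodule ℝ (EuclideanSpace ℝ (Fin m)))
    (hK : K = ⨆ μ ∈ {μ : ℝ | αstar ≤ μ}, Module.End.eigenspace
      (S : EuclideanSpace ℝ (Fin m) →ₗ[ℝ] EuclideanSpace ℝ (Fin m)) μ)
    (hKhat : Khat = ⨆ μ ∈ {μ : ℝ | αstar - γ / 2 < μ}, Module.End.eigenspace
      (Shat : EuclideanSpace ℝ (Fin m) →ₗ[ℝ] EuclideanSpace ℝ (Fin m)) μ)
    (P Phat : EuclideanSpace ℝ (Fin m) →L[ℝ] EuclideanSpace ℝ (Fin m))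
    (hP : ∀ v, P v = K.orthogonalProjectionOnto v)
    (hPhat : ∀ v, Phat v = Khat.orthogonalProjectionOnto v)
    (hpert : ‖Shat - S‖ < γ / 2) :
    ‖Phat - P‖ ≤ (2 / γ) * ‖Shat - S‖ :=
  spectral_projection_perturbation_general S Shat hS hShat αstar γ hγ hgap K Khat hK hKhat P Phat hP
    hPhat
end
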